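/- arXiv:2208.10324 — 2 statements merged into one kernel-verified Lean document; each statement's English description precedes it below -/
import Mathlib

section
/- Let C ∈ ℝ^{N×N} with N ≥ 1 satisfy C_{kk} ≤ - Σ_{j≠k} |C_{kj}| for every row index k. Then C has no eigenvalue (over ℂ) of the form iβ with β ∈ ℝ, β ≠ 0, i.e., the spectrum of C intersects the imaginary axis at most in {0}. -/
open Finset

/-- If a real `N × N` matrix `C` (with `N ≥ 1`) satisfies the row condition
`C k k ≤ - ∑_{j ≠ k} |C k j|` for every `k` (i.e. `C` is `ℓ^∞`-dissipative),
then the spectrum of `C` over `ℂ` intersects the imaginary axis at most in `{0}`. -/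
theorem stmt_9 (N : ℕ) (hN : 1 ≤ N) (C : Matrix (Fin N) (Fin N) ℝ)
    (hdiss : ∀ k, C k k ≤ - ∑ j ∈ univ.erase k, |C k j|) :
    ∀ β : ℝ, (Complex.I * β) ∈ spectrum ℂ (C.map (Complex.ofReal)) → β = 0 := by
  intro β hβ
  set A : Matrix (Fin N) (Fin N) ℂ := C.map (Complex.ofReal) with hA
  rw [← AlgEquiv.spectrum_eq (Matrix.toLinAlgEquiv' : Matrix (Fin N) (Fin N) ℂ ≃ₐ[ℂ] _),
    ← Module.End.hasEigenvalue_iff_mem_spectrum] at hβ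
  obtain ⟨v, hv⟩ := hβ.exists_hasEigenvector
  have hv0 : v ≠ 0 := hv.2
  have hmul : A.mulVec v = (Complex.I * β) • v := by
    have := hv.apply_eq_smul
    simpa using this
  -- pick k maximizing abs (v k)
  haveI : NeZero N := ⟨by omega⟩
  obtain ⟨k, -, hk⟩ := Finset.exists_max_image (univ : Finset (Fin N))
    (fun j => ‖v j‖) ⟨0, mem_univ _⟩
  have hvk : 0 < ‖v k‖ := by
    rcases Function.ne_iff.mp hv0 with ⟨j, hj⟩
    exact lt_of_lt_of_le (by simpa using hj) (hk j (mem_univ j))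
  -- row equation
  have hrow : (Complex.I * β - (C k k : ℂ)) * v k = ∑ j ∈ univ.erase k, (C k j : ℂ) * v j := by
    have h1 : ∑ j, (C k j : ℂ) * v j = (Complex.I * β) * v k := by
      have := congrFun hmul k
      simpa [Matrix.mulVec, dotProduct, hA, Matrix.map_apply] using this
    rw [← Finset.add_sum_erase _ _ (mem_univ k)] at h1
    linear_combination -h1
  have hineq : ‖Complex.I * β - (C k k : ℂ)‖ * ‖v k‖
      ≤ (∑ j ∈ univ.erase k, |C k j|) * ‖v k‖ := by
    rw [← norm_mul, hrow]
    calc ‖∑ j ∈ univ.erase k, (C k j : ℂ) * v j‖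
        ≤ ∑ j ∈ univ.erase k, ‖(C k j : ℂ) * v j‖ := by
          exact norm_sum_le _ _
      _ ≤ ∑ j ∈ univ.erase k, |C k j| * ‖v k‖ := by
          apply Finset.sum_le_sum
          intro j hj
          rw [norm_mul, Complex.norm_real, Real.norm_eq_abs]
          exact mul_le_mul_of_nonneg_left (hk j (mem_univ j)) (abs_nonneg _)
      _ = (∑ j ∈ univ.erase k, |C k j|) * ‖v k‖ := by
          rw [Finset.sum_mul]
  have h2 : ‖Complex.I * β - (C k k : ℂ)‖ ≤ ∑ j ∈ univ.erase k, |C k j| :=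
    le_of_mul_le_mul_right hineq hvk
  have h3 : ∑ j ∈ univ.erase k, |C k j| ≤ -C k k := by
    have := hdiss k; linarith
  have h4 : ‖Complex.I * β - (C k k : ℂ)‖ ≤ -C k k := h2.trans h3
  have hsq : β ^ 2 + C k k ^ 2 ≤ (-C k k) ^ 2 := by
    have := pow_le_pow_left₀ (norm_nonneg _) h4 2
    rw [Complex.sq_norm, Complex.normSq_apply] at this
    simpa [Complex.add_re, Complex.add_im, Complex.mul_re, Complex.mul_im, sq] using this
  nlinarith [sq_nonneg β]
end

section
/- Let C ∈ ℝ^{N×N} satisfy C_{kk} ≤ - Σ_{j≠k} |C_{jk}| for every column index k (ℓ¹-dissipativity). Then the spectrum of C over ℂ intersects the imaginary axis at most in {0}, i.e., if iβ is an eigenvalue with β ∈ ℝ then β = 0. -/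
/-!
An eigenvalue `μ` of `C` lies, by Gershgorin's theorem applied to columns, in a disc centred at
some `C k k ≤ 0` of radius `∑_{j ≠ k} |C j k| ≤ -C k k`. Such a disc lies in the closed left
half-plane and meets the imaginary axis only at `0`.
-/

open Finset Matrix

/-- Gershgorin's circle theorem, column version. -/
theorem Matrix.exists_norm_diag_sub_le_sum_col_of_mem_spectrum {K n : Type*} [NormedField K]
    [Fintype n] [DecidableEq n] {A : Matrix n n K} {μ : K} (hμ : μ ∈ spectrum K A) :
    ∃ k, ‖A k k - μ‖ ≤ ∑ j ∈ univ.erase k, ‖A j k‖ := by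
  by_contra! h
  refine hμ ((isUnit_iff_isUnit_det _).mpr (det_ne_zero_of_sum_col_lt_diag fun k => ?_).isUnit)
  calc ∑ j ∈ univ.erase k, ‖(algebraMap K (Matrix n n K) μ - A) j k‖
      = ∑ j ∈ univ.erase k, ‖A j k‖ :=
        sum_congr rfl fun j hj => by
          simp [algebraMap_matrix_apply, (ne_of_mem_erase hj)]
    _ < ‖A k k - μ‖ := h k
    _ = ‖(algebraMap K (Matrix n n K) μ - A) k k‖ := by
        simp [algebraMap_matrix_apply, norm_sub_rev]

theorem Complex.eq_zero_of_norm_ofReal_sub_I_mul_le_neg {c β : ℝ}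
    (h : ‖(c : ℂ) - I * β‖ ≤ -c) : β = 0 := by
  have hnorm : ‖(c : ℂ) - I * β‖ ^ 2 = c ^ 2 + β ^ 2 := by
    rw [Complex.sq_norm, show (c : ℂ) - I * β = c + (-β : ℝ) * I by push_cast; ring,
      normSq_add_mul_I, neg_sq]
  nlinarith [norm_nonneg ((c : ℂ) - I * β)]

/-- If a real `N × N` matrix `C` satisfies the column condition
`C k k ≤ - ∑_{j ≠ k} |C j k|` for every `k` (i.e. `C` is `ℓ¹`-dissipative),
then the spectrum of `C` over `ℂ` intersects the imaginary axis at most in `{0}`. -/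
theorem stmt_10 (N : ℕ) (C : Matrix (Fin N) (Fin N) ℝ)
    (hdiss : ∀ k, C k k ≤ - ∑ j ∈ univ.erase k, |C j k|) :
    ∀ β : ℝ, (Complex.I * β) ∈ spectrum ℂ (C.map (Complex.ofReal)) → β = 0 := by
  intro β hβ
  obtain ⟨k, hk⟩ := exists_norm_diag_sub_le_sum_col_of_mem_spectrum hβ
  refine Complex.eq_zero_of_norm_ofReal_sub_I_mul_le_neg (c := C k k) ?_
  calc ‖(C k k : ℂ) - Complex.I * β‖ ≤ ∑ j ∈ univ.erase k, ‖(C j k : ℂ)‖ := hk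
    _ = ∑ j ∈ univ.erase k, |C j k| := by simp only [Complex.norm_real, Real.norm_eq_abs]
    _ ≤ -C k k := by linarith [hdiss k]
end
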